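/- For the six-vertex model Wang tile set B₆ = {(0,0,0,0), (1,1,1,1), (0,1,1,0), (1,0,0,1), (1,1,0,0), (0,0,1,1)} over symbols {0,1} (tiles written as (b,l,t,r)), the spatial entropy satisfies h(B₆) ≥ (1/4)·log((3+√5)/2). -/

import Mathlib

open Filter

/-- A symbol (color) for two-symbol Wang tiles. -/
abbrev Col : Type := Fin 2

/-- A Wang tile `(b, l, t, r)`: colors of the bottom, left, top and right edges. -/
abbrev WTile : Type := Col × Col × Col × Col

def WTile.b (T : WTile) : Col := T.1
def WTile.l (T : WTile) : Col := T.2.1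
def WTile.t (T : WTile) : Col := T.2.2.1
def WTile.r (T : WTile) : Col := T.2.2.2

/-- An edge coloring of the `m × n` rectangular lattice `Z_{m×n}`:
colors of the horizontal edges (indexed by their left endpoint `(i,j)`,
`0 ≤ i ≤ m-2`, `0 ≤ j ≤ n-1`) and of the vertical edges (indexed by their
bottom endpoint `(i,j)`, `0 ≤ i ≤ m-1`, `0 ≤ j ≤ n-2`). -/
def Coloring (m n : ℕ) : Type :=
  (Fin (m - 1) × Fin n → Col) × (Fin m × Fin (n - 1) → Col)

/-- The Wang tile `(b,l,t,r)` carried by the unit square with bottom-left corner `(i,j)`. -/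
def Coloring.square {m n : ℕ} (c : Coloring m n) (i : Fin (m - 1)) (j : Fin (n - 1)) :
    WTile :=
  (c.1 (i, ⟨j.1, by have := j.2; omega⟩),
   c.2 (⟨i.1, by have := i.2; omega⟩, j),
   c.1 (i, ⟨j.1 + 1, by have := j.2; omega⟩),
   c.2 (⟨i.1 + 1, by have := i.2; omega⟩, j))

/-- A coloring is `B`-admissible if every unit square carries a tile of `B`. -/
def Admissible (B : Finset WTile) {m n : ℕ} (c : Coloring m n) : Prop :=
  ∀ i j, c.square i j ∈ B

/-- `Γ_{m×n}(B)`: the number of `B`-admissible edge colorings of the `m × n` lattice. -/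
noncomputable def Gamma (B : Finset WTile) (m n : ℕ) : ℕ :=
  Nat.card {c : Coloring m n // Admissible B c}

/-- The spatial entropy `h(B) = lim_{m,n→∞} log Γ_{m×n}(B) / (mn)`. -/
noncomputable def entropy (B : Finset WTile) : ℝ :=
  limsup (fun p : ℕ × ℕ => Real.log (Gamma B p.1 p.2) / (p.1 * p.2)) (atTop ×ˢ atTop)

/-- The six-vertex model tile set. -/
def sixVertex : Finset WTile :=
  {((0 : Col), (0 : Col), (0 : Col), (0 : Col)), (1, 1, 1, 1), (0, 1, 1, 0),
    (1, 0, 0, 1), (1, 1, 0, 0), (0, 0, 1, 1)}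

/-- Words `ℕ → Col` supported on `[0,m)` with no two adjacent `1`s. -/
def FibWord (m : ℕ) : Type :=
  {w : ℕ → Col // (∀ i, m ≤ i → w i = 0) ∧ ∀ i, w i = 0 ∨ w (i + 1) = 0}

instance FibWord.finite (m : ℕ) : Finite (FibWord m) := by
  apply Finite.of_injective (fun w : FibWord m => (fun i : Fin m => w.1 i.1))
  intro w w' h
  apply Subtype.ext; funext i
  by_cases hi : i < m
  · exact congrFun h ⟨i, hi⟩
  · rw [w.2.1 i (le_of_not_gt hi), w'.2.1 i (le_of_not_gt hi)]

def FibWord.zero (m : ℕ) : FibWord m :=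
  ⟨fun _ => 0, fun _ _ => rfl, fun _ => Or.inl rfl⟩

instance (m : ℕ) : Nonempty (FibWord m) := ⟨FibWord.zero m⟩

lemma fibword_card_zero_ge : 1 ≤ Nat.card (FibWord 0) := Nat.card_pos

def boolToFibWord (b : Bool) : FibWord 1 :=
  ⟨fun i => if i = 0 then (if b then 1 else 0) else 0,
    fun i hi => if_neg (by omega),
    fun i => Or.inr (if_neg (by omega))⟩

lemma fibword_card_one_ge : 2 ≤ Nat.card (FibWord 1) := by
  have h : Function.Injective boolToFibWord := by
    intro b b' h
    have := congrFun (congrArg Subtype.val h) 0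
    simp only [boolToFibWord, if_pos rfl] at this
    cases b <;> cases b' <;> simp_all
  simpa using Nat.card_le_card_of_injective _ h

def pushSum (m : ℕ) : FibWord (m + 1) ⊕ FibWord m → FibWord (m + 2)
  | Sum.inl w => ⟨w.1, fun i hi => w.2.1 i (by omega), w.2.2⟩
  | Sum.inr w => ⟨fun i => if i = m + 1 then 1 else w.1 i,
      fun i hi => by
        show (if i = m + 1 then 1 else w.1 i) = 0
        rw [if_neg (by omega)]; exact w.2.1 i (by omega),
      fun i => by
        show (if i = m + 1 then 1 else w.1 i) = 0 ∨ (if i + 1 = m + 1 then 1 else w.1 (i + 1)) = 0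
        rcases eq_or_ne i m with rfl | him
        · exact Or.inl (by rw [if_neg (by omega)]; exact w.2.1 i le_rfl)
        · rcases eq_or_ne i (m + 1) with rfl | him1
          · exact Or.inr (by rw [if_neg (by omega)]; exact w.2.1 _ (by omega))
          · rw [if_neg him1, if_neg (by omega)]; exact w.2.2 i⟩

lemma fibword_card_rec (m : ℕ) :
    Nat.card (FibWord (m + 1)) + Nat.card (FibWord m) ≤ Nat.card (FibWord (m + 2)) := by
  rw [← Nat.card_sum]
  apply Nat.card_le_card_of_injective (pushSum m)
  rintro (w | w) (w' | w') h
  · rw [Sum.inl.injEq]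
    have h1 := congrArg Subtype.val h
    exact Subtype.ext h1
  · exfalso
    have h1 : w.1 (m + 1) = (if m + 1 = m + 1 then 1 else w'.1 (m + 1)) :=
      congrFun (congrArg Subtype.val h) (m + 1)
    rw [if_pos rfl, w.2.1 (m + 1) le_rfl] at h1
    exact absurd h1 (by decide)
  · exfalso
    have h1 : (if m + 1 = m + 1 then 1 else w.1 (m + 1)) = w'.1 (m + 1) :=
      congrFun (congrArg Subtype.val h) (m + 1)
    rw [if_pos rfl, w'.2.1 (m + 1) le_rfl] at h1
    exact absurd h1 (by decide)
  · rw [Sum.inr.injEq]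
    apply Subtype.ext; funext i
    have hi : (if i = m + 1 then 1 else w.1 i) = (if i = m + 1 then 1 else w'.1 i) :=
      congrFun (congrArg Subtype.val h) i
    rcases eq_or_ne i (m + 1) with rfl | him
    · rw [w.2.1 (m + 1) (by omega), w'.2.1 (m + 1) (by omega)]
    · rwa [if_neg him, if_neg him] at hi

lemma gold_pow_le_fibword_card : ∀ m, Real.goldenRatio ^ m ≤ (Nat.card (FibWord m) : ℝ) := by
  have key : ∀ m, Real.goldenRatio ^ m ≤ (Nat.card (FibWord m) : ℝ) ∧
      Real.goldenRatio ^ (m + 1) ≤ (Nat.card (FibWord (m + 1)) : ℝ) := by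
    intro m
    induction m with
    | zero =>
      constructor
      · simpa using (by exact_mod_cast fibword_card_zero_ge : (1 : ℝ) ≤ Nat.card (FibWord 0))
      · have h2 : (2 : ℝ) ≤ Nat.card (FibWord 1) := by exact_mod_cast fibword_card_one_ge
        calc Real.goldenRatio ^ 1 = Real.goldenRatio := pow_one _
          _ ≤ 2 := Real.goldenRatio_lt_two.le
          _ ≤ _ := h2
    | succ k ih =>
      refine ⟨ih.2, ?_⟩
      have hrec : (Nat.card (FibWord (k + 1)) : ℝ) + Nat.card (FibWord k) ≤
          Nat.card (FibWord (k + 2)) := by exact_mod_cast fibword_card_rec k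
      have hsq : Real.goldenRatio ^ (k + 2) = Real.goldenRatio ^ (k + 1) + Real.goldenRatio ^ k := by
        calc Real.goldenRatio ^ (k + 2) = Real.goldenRatio ^ k * Real.goldenRatio ^ 2 := by ring
          _ = Real.goldenRatio ^ k * (Real.goldenRatio + 1) := by rw [Real.goldenRatio_sq]
          _ = Real.goldenRatio ^ (k + 1) + Real.goldenRatio ^ k := by ring
      rw [hsq]
      calc Real.goldenRatio ^ (k + 1) + Real.goldenRatio ^ k
          ≤ (Nat.card (FibWord (k + 1)) : ℝ) + Nat.card (FibWord k) := add_le_add ih.2 ih.1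
        _ ≤ _ := hrec
  exact fun m => (key m).1


instance Coloring.finite (m n : ℕ) : Finite (Coloring m n) :=
  inferInstanceAs (Finite ((Fin (m - 1) × Fin n → Col) × (Fin m × Fin (n - 1) → Col)))

instance (B : Finset WTile) (m n : ℕ) : Finite {c : Coloring m n // Admissible B c} :=
  Subtype.finite

lemma mem_six_even (a b : Col) (h : a = 0 ∨ b = 0) :
    (((0 : Col), a, max a b, b) : WTile) ∈ sixVertex := by
  fin_cases a <;> fin_cases b <;> simp_all [sixVertex] <;> decide

lemma mem_six_odd (a b : Col) (h : a = 0 ∨ b = 0) :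
    ((max a b, a, (0 : Col), b) : WTile) ∈ sixVertex := by
  fin_cases a <;> fin_cases b <;> simp_all [sixVertex] <;> decide

/-- The coloring built from a family of rows `s k : ℕ → Col`. -/
def build (m n : ℕ) (s : ℕ → ℕ → Col) : Coloring m n :=
  (fun q => if q.2.1 % 2 = 1 then
      max (s (q.2.1 / 2) q.1.1) (s (q.2.1 / 2) (q.1.1 + 1)) else 0,
   fun q => s (q.2.1 / 2) q.1.1)

lemma build_admissible (m n : ℕ) (s : ℕ → ℕ → Col)
    (hs : ∀ k i, s k i = 0 ∨ s k (i + 1) = 0) :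
    Admissible sixVertex (build m n s) := by
  intro i j
  show ((build m n s).1 (i, ⟨j.1, _⟩), (build m n s).2 (⟨i.1, _⟩, j),
    (build m n s).1 (i, ⟨j.1 + 1, _⟩), (build m n s).2 (⟨i.1 + 1, _⟩, j)) ∈ sixVertex
  simp only [build]
  by_cases hj : j.1 % 2 = 1
  · rw [if_pos hj, if_neg (by omega)]
    exact mem_six_odd _ _ (hs (j.1 / 2) i.1)
  · rw [if_neg hj, if_pos (by omega), (by omega : (j.1 + 1) / 2 = j.1 / 2)]
    exact mem_six_even _ _ (hs (j.1 / 2) i.1)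

def sOf {m K : ℕ} (S : Fin K → FibWord m) : ℕ → ℕ → Col :=
  fun k i => if h : k < K then (S ⟨k, h⟩).1 i else 0

lemma sOf_adj {m K : ℕ} (S : Fin K → FibWord m) (k i : ℕ) :
    sOf S k i = 0 ∨ sOf S k (i + 1) = 0 := by
  unfold sOf
  split
  · exact (S _).2.2 i
  · exact Or.inl rfl

lemma gamma_lower (m n : ℕ) (hm : 1 ≤ m) :
    Real.goldenRatio ^ (m * ((n - 1) / 2)) ≤ (Gamma sixVertex m n : ℝ) := by
  set K := (n - 1) / 2 with hK
  have hinj : Function.Injective (fun S : Fin K → FibWord m =>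
      (⟨build m n (sOf S), build_admissible m n _ (sOf_adj S)⟩ :
        {c : Coloring m n // Admissible sixVertex c})) := by
    intro S S' h
    have hval := congrArg (fun c : {c : Coloring m n // Admissible sixVertex c} => c.1.2) h
    funext k
    apply Subtype.ext; funext i
    by_cases hi : i < m
    · have h2k : 2 * k.1 < n - 1 := by have := k.2; omega
      have := congrFun hval (⟨i, hi⟩, ⟨2 * k.1, h2k⟩)
      simp only [build, sOf, (by omega : 2 * k.1 / 2 = k.1)] at this
      rw [dif_pos k.2, dif_pos k.2] at this
      simpa using this
    · rw [(S k).2.1 i (le_of_not_gt hi), (S' k).2.1 i (le_of_not_gt hi)]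
  have hcard : Nat.card (Fin K → FibWord m) ≤ Gamma sixVertex m n :=
    Nat.card_le_card_of_injective _ hinj
  have hcard2 : Nat.card (Fin K → FibWord m) = Nat.card (FibWord m) ^ K := by
    rw [Nat.card_fun, Nat.card_eq_fintype_card (α := Fin K), Fintype.card_fin]
  calc Real.goldenRatio ^ (m * K) = (Real.goldenRatio ^ m) ^ K := by rw [pow_mul]
    _ ≤ (Nat.card (FibWord m) : ℝ) ^ K :=
        pow_le_pow_left₀ (pow_nonneg Real.goldenRatio_pos.le m) (gold_pow_le_fibword_card m) K
    _ = ((Nat.card (FibWord m) ^ K : ℕ) : ℝ) := by push_cast; ring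
    _ = ((Nat.card (Fin K → FibWord m) : ℕ) : ℝ) := by rw [hcard2]
    _ ≤ _ := by exact_mod_cast hcard


lemma one_le_gamma (m n : ℕ) : 1 ≤ Gamma sixVertex m n := by
  have : Nonempty {c : Coloring m n // Admissible sixVertex c} :=
    ⟨⟨build m n (fun _ _ => 0), build_admissible m n _ (fun _ _ => Or.inl rfl)⟩⟩
  exact Nat.card_pos

lemma gamma_upper (m n : ℕ) : Gamma sixVertex m n ≤ 2 ^ (2 * (m * n)) := by
  have h1 : Gamma sixVertex m n ≤ Nat.card (Coloring m n) :=
    Nat.card_le_card_of_injective Subtype.val Subtype.coe_injective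
  have h2 : Nat.card (Coloring m n) = 2 ^ ((m - 1) * n) * 2 ^ (m * (n - 1)) := by
    have e : Nat.card (Coloring m n) =
        Nat.card ((Fin (m - 1) × Fin n → Col) × (Fin m × Fin (n - 1) → Col)) := rfl
    rw [e, Nat.card_prod, Nat.card_fun, Nat.card_fun]
    simp [Nat.card_eq_fintype_card]
  calc Gamma sixVertex m n ≤ 2 ^ ((m - 1) * n) * 2 ^ (m * (n - 1)) := h2 ▸ h1
    _ = 2 ^ ((m - 1) * n + m * (n - 1)) := (pow_add 2 _ _).symm
    _ ≤ 2 ^ (2 * (m * n)) := Nat.pow_le_pow_right (by norm_num)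
        (by cases m with
            | zero => simp
            | succ m => cases n with
              | zero => simp
              | succ n => simp [Nat.succ_sub_one]; ring_nf; omega)

/-- The spatial entropy of the six-vertex model satisfies
`h(B₆) ≥ (1/4) log((3+√5)/2)`. -/
theorem sixVertex_entropy_lower_bound :
    (1 / 4 : ℝ) * Real.log ((3 + Real.sqrt 5) / 2) ≤ entropy sixVertex := by

  have hphi2 : ((3 : ℝ) + Real.sqrt 5) / 2 = Real.goldenRatio ^ 2 := by
    rw [Real.goldenRatio_sq]; rw [Real.goldenRatio]; ring
  have heq : (1 / 4 : ℝ) * Real.log ((3 + Real.sqrt 5) / 2) =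
      1 / 2 * Real.log Real.goldenRatio := by
    rw [hphi2, Real.log_pow]; push_cast; ring
  rw [heq]
  set u : ℕ × ℕ → ℝ :=
    fun p => Real.log (Gamma sixVertex p.1 p.2) / (p.1 * p.2) with hu
  set g : ℕ × ℕ → ℝ := fun p => (1 / 2 - 1 / (p.2 : ℝ)) * Real.log Real.goldenRatio with hg
  have hgt : Tendsto g (atTop ×ˢ atTop) (nhds (1 / 2 * Real.log Real.goldenRatio)) := by
    have h1 : Tendsto (fun p : ℕ × ℕ => 1 / (p.2 : ℝ)) (atTop ×ˢ atTop) (nhds 0) :=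
      tendsto_one_div_atTop_nhds_zero_nat.comp tendsto_snd
    have h2 := ((tendsto_const_nhds (x := (1 / 2 : ℝ))
      (f := atTop ×ˢ atTop)).sub h1).mul_const (Real.log Real.goldenRatio)
    rw [hg]
    simpa [one_div] using h2
  have hbdd : IsBoundedUnder (· ≤ ·) (atTop ×ˢ atTop) u := by
    refine ⟨2 * Real.log 2, ?_⟩
    rw [eventually_map]
    filter_upwards [Filter.Eventually.prod_mk (eventually_ge_atTop 1) (eventually_ge_atTop 1)] with p hp
    obtain ⟨hm, hn⟩ := hp
    have hmn : (0 : ℝ) < (p.1 : ℝ) * (p.2 : ℝ) := by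
      have : (0:ℝ) < (p.1 : ℝ) := by exact_mod_cast hm
      have h2 : (0:ℝ) < (p.2 : ℝ) := by exact_mod_cast hn
      positivity
    have h1 : (1 : ℝ) ≤ (Gamma sixVertex p.1 p.2 : ℝ) := by
      exact_mod_cast one_le_gamma p.1 p.2
    have hub : (Gamma sixVertex p.1 p.2 : ℝ) ≤ 2 ^ (2 * (p.1 * p.2)) := by
      exact_mod_cast gamma_upper p.1 p.2
    have hlog : Real.log (Gamma sixVertex p.1 p.2) ≤ (2 * (p.1 * p.2) : ℕ) * Real.log 2 := by
      rw [← Real.log_pow]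
      exact (Real.log_le_log_iff (by linarith) (by positivity)).mpr hub
    show Real.log (Gamma sixVertex p.1 p.2) / (p.1 * p.2) ≤ 2 * Real.log 2
    rw [div_le_iff₀ hmn]
    calc Real.log (Gamma sixVertex p.1 p.2) ≤ (2 * (p.1 * p.2) : ℕ) * Real.log 2 := hlog
      _ = 2 * Real.log 2 * ((p.1 : ℝ) * p.2) := by push_cast; ring
  have hev : ∀ᶠ p in atTop ×ˢ atTop, g p ≤ u p := by
    filter_upwards [Filter.Eventually.prod_mk (eventually_ge_atTop 1) (eventually_ge_atTop 1)] with p hp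
    obtain ⟨hm, hn⟩ := hp
    obtain ⟨m, n⟩ := p
    simp only at hm hn ⊢
    set K := (n - 1) / 2 with hK
    have hm0 : (0 : ℝ) < (m : ℝ) := by exact_mod_cast hm
    have hn0 : (0 : ℝ) < (n : ℝ) := by exact_mod_cast hn
    have hΓ := gamma_lower m n hm
    have hΓ1 : (1 : ℝ) ≤ (Gamma sixVertex m n : ℝ) := by exact_mod_cast one_le_gamma m n
    have hlog : ((m * K : ℕ) : ℝ) * Real.log Real.goldenRatio ≤
        Real.log (Gamma sixVertex m n) := by
      rw [← Real.log_pow]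
      exact (Real.log_le_log_iff (pow_pos Real.goldenRatio_pos _) (by linarith)).mpr hΓ
    have hn2K : (n : ℝ) ≤ 2 * (K : ℝ) + 2 := by
      exact_mod_cast (show n ≤ 2 * ((n - 1) / 2) + 2 by omega)
    have hfrac : 1 / 2 - 1 / (n : ℝ) ≤ (K : ℝ) / n := by
      rw [sub_le_iff_le_add, ← add_div, le_div_iff₀ hn0]
      linarith
    have hlogφ : (0 : ℝ) ≤ Real.log Real.goldenRatio := Real.log_nonneg Real.one_lt_goldenRatio.le
    show g (m, n) ≤ Real.log (Gamma sixVertex m n) / ((m : ℝ) * n)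
    calc g (m, n) = (1 / 2 - 1 / (n : ℝ)) * Real.log Real.goldenRatio := rfl
      _ ≤ ((K : ℝ) / n) * Real.log Real.goldenRatio :=
          mul_le_mul_of_nonneg_right hfrac hlogφ
      _ = ((m : ℝ) * K * Real.log Real.goldenRatio) / ((m : ℝ) * n) := by
          field_simp
      _ = (((m * K : ℕ) : ℝ) * Real.log Real.goldenRatio) / ((m : ℝ) * n) := by push_cast; ring
      _ ≤ Real.log (Gamma sixVertex m n) / ((m : ℝ) * n) := by
          apply div_le_div_of_nonneg_right hlog (by positivity) |>.trans_eq rfl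
  have hcob : IsCoboundedUnder (· ≤ ·) (atTop ×ˢ atTop) g := hgt.isCoboundedUnder_le
  calc 1 / 2 * Real.log Real.goldenRatio = limsup g (atTop ×ˢ atTop) := hgt.limsup_eq.symm
    _ ≤ limsup u (atTop ×ˢ atTop) := limsup_le_limsup hev hcob hbdd
    _ = entropy sixVertex := rfl
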